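/- arXiv:1210.2451 — 10 statements merged into one kernel-verified Lean document; each statement's English description precedes it below -/
import Mathlib

section
/- Let G be the least function from pairs of subsets of S₁ × S₂ to subsets of S₁ × S₂, monotone in each argument, satisfying G X Y = (X ∩ Y) ∪ ⋃_{a ∈ Act} G (⟨a⟩₁X) ([a]₂Y) for all X, Y ⊆ S₁ × S₂ (it exists as the least fixed point of the monotone operator F ↦ (λ X Y, (X ∩ Y) ∪ ⋃_{a ∈ Act} F (⟨a⟩₁X) ([a]₂Y)) on the complete lattice of monotone binary functions). Then for all X, Y ⊆ S₁ × S₂: G X Y = ⋃_{t ∈ Act*} (⟨t⟩₁X ∩ [t]₂Y), where for t = a₁⋯aₙ we set ⟨t⟩₁X := ⟨a₁⟩₁⋯⟨aₙ⟩₁X and [t]₂Y := [a₁]₂⋯[aₙ]₂Y. -/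
/-- The diamond modality in the first component:
`⟨a⟩₁X = {(p,q) | ∃ p', p →₁^a p' ∧ (p',q) ∈ X}`. -/
def dia1 {S₁ S₂ Act : Type*} (tr1 : S₁ → Act → S₁ → Prop) (a : Act)
    (X : Set (S₁ × S₂)) : Set (S₁ × S₂) :=
  {pq | ∃ p', tr1 pq.1 a p' ∧ (p', pq.2) ∈ X}

/-- The box modality in the second component:
`[a]₂Y = {(p,q) | ∀ q', q →₂^a q' → (p,q') ∈ Y}`. -/
def box2 {S₁ S₂ Act : Type*} (tr2 : S₂ → Act → S₂ → Prop) (a : Act)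
    (Y : Set (S₁ × S₂)) : Set (S₁ × S₂) :=
  {pq | ∀ q', tr2 pq.2 a q' → (pq.1, q') ∈ Y}

/-- `⟨t⟩₁X` for a word `t = a₁⋯aₙ`, i.e. `⟨a₁⟩₁⋯⟨aₙ⟩₁X`. -/
def diaW {S₁ S₂ Act : Type*} (tr1 : S₁ → Act → S₁ → Prop) :
    List Act → Set (S₁ × S₂) → Set (S₁ × S₂)
  | [], X => X
  | a :: t, X => dia1 tr1 a (diaW tr1 t X)

/-- `[t]₂Y` for a word `t = a₁⋯aₙ`, i.e. `[a₁]₂⋯[aₙ]₂Y`. -/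
def boxW {S₁ S₂ Act : Type*} (tr2 : S₂ → Act → S₂ → Prop) :
    List Act → Set (S₁ × S₂) → Set (S₁ × S₂)
  | [], Y => Y
  | a :: t, Y => box2 tr2 a (boxW tr2 t Y)

lemma dia1_mono {S₁ S₂ Act : Type*} (tr1 : S₁ → Act → S₁ → Prop) (a : Act)
    {X X' : Set (S₁ × S₂)} (h : X ⊆ X') : dia1 tr1 a X ⊆ dia1 tr1 a X' := by
  rintro pq ⟨p', ht, hx⟩; exact ⟨p', ht, h hx⟩

lemma box2_mono {S₁ S₂ Act : Type*} (tr2 : S₂ → Act → S₂ → Prop) (a : Act)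
    {Y Y' : Set (S₁ × S₂)} (h : Y ⊆ Y') : box2 tr2 a Y ⊆ box2 tr2 a Y' := by
  intro pq hy q' ht; exact h (hy q' ht)

lemma diaW_mono {S₁ S₂ Act : Type*} (tr1 : S₁ → Act → S₁ → Prop) (t : List Act)
    {X X' : Set (S₁ × S₂)} (h : X ⊆ X') : diaW tr1 t X ⊆ diaW tr1 t X' := by
  induction t with
  | nil => exact h
  | cons a t ih => exact dia1_mono tr1 a ih

lemma boxW_mono {S₁ S₂ Act : Type*} (tr2 : S₂ → Act → S₂ → Prop) (t : List Act)
    {Y Y' : Set (S₁ × S₂)} (h : Y ⊆ Y') : boxW tr2 t Y ⊆ boxW tr2 t Y' := by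
  induction t with
  | nil => exact h
  | cons a t ih => exact box2_mono tr2 a ih

lemma diaW_append {S₁ S₂ Act : Type*} (tr1 : S₁ → Act → S₁ → Prop) (t : List Act)
    (a : Act) (X : Set (S₁ × S₂)) :
    diaW tr1 (t ++ [a]) X = diaW tr1 t (dia1 tr1 a X) := by
  induction t with
  | nil => rfl
  | cons b s ih => simp only [List.cons_append, diaW, boxW, List.append_eq]; rw [ih]

lemma boxW_append {S₁ S₂ Act : Type*} (tr2 : S₂ → Act → S₂ → Prop) (t : List Act)
    (a : Act) (Y : Set (S₁ × S₂)) :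
    boxW tr2 (t ++ [a]) Y = boxW tr2 t (box2 tr2 a Y) := by
  induction t with
  | nil => rfl
  | cons b s ih => simp only [List.cons_append, diaW, boxW, List.append_eq]; rw [ih]

/-- if `G` is the least function, monotone in each argument, satisfying
`G X Y = (X ∩ Y) ∪ ⋃_{a ∈ Act} G (⟨a⟩₁X) ([a]₂Y)`, then
`G X Y = ⋃_{t ∈ Act*} (⟨t⟩₁X ∩ [t]₂Y)`. -/
theorem stmt_0 {S₁ S₂ Act : Type*} [Fintype Act]
    (tr1 : S₁ → Act → S₁ → Prop) (tr2 : S₂ → Act → S₂ → Prop)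
    (G : Set (S₁ × S₂) → Set (S₁ × S₂) → Set (S₁ × S₂))
    (hmono : ∀ X X' Y Y', X ⊆ X' → Y ⊆ Y' → G X Y ⊆ G X' Y')
    (heq : ∀ X Y, G X Y = (X ∩ Y) ∪ ⋃ a : Act, G (dia1 tr1 a X) (box2 tr2 a Y))
    (hleast : ∀ G' : Set (S₁ × S₂) → Set (S₁ × S₂) → Set (S₁ × S₂),
      (∀ X X' Y Y', X ⊆ X' → Y ⊆ Y' → G' X Y ⊆ G' X' Y') →
      (∀ X Y, G' X Y = (X ∩ Y) ∪ ⋃ a : Act, G' (dia1 tr1 a X) (box2 tr2 a Y)) →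
      ∀ X Y, G X Y ⊆ G' X Y) :
    ∀ X Y : Set (S₁ × S₂), G X Y = ⋃ t : List Act, (diaW tr1 t X ∩ boxW tr2 t Y) := by
  intro X Y
  apply Set.Subset.antisymm
  · -- G ⊆ H via leastness
    set H : Set (S₁ × S₂) → Set (S₁ × S₂) → Set (S₁ × S₂) :=
      fun X Y => ⋃ t : List Act, (diaW tr1 t X ∩ boxW tr2 t Y) with hH
    have Hmono : ∀ X X' Y Y', X ⊆ X' → Y ⊆ Y' → H X Y ⊆ H X' Y' := by
      intro X X' Y Y' hX hY
      refine Set.iUnion_mono fun t => ?_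
      exact Set.inter_subset_inter (diaW_mono tr1 t hX) (boxW_mono tr2 t hY)
    have Heq : ∀ X Y, H X Y = (X ∩ Y) ∪ ⋃ a : Act, H (dia1 tr1 a X) (box2 tr2 a Y) := by
      intro X Y
      apply Set.Subset.antisymm
      · refine Set.iUnion_subset fun t => ?_
        rcases List.eq_nil_or_concat t with rfl | ⟨s, a, rfl⟩
        
        · exact Set.subset_union_left
        · rw [List.concat_eq_append, diaW_append, boxW_append]
          refine Set.subset_union_of_subset_right ?_ _
          exact Set.subset_iUnion_of_subset a (Set.subset_iUnion_of_subset s le_rfl)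
      · apply Set.union_subset
        · exact Set.subset_iUnion_of_subset ([] : List Act) le_rfl
        · refine Set.iUnion_subset fun a => Set.iUnion_subset fun t => ?_
          rw [← diaW_append, ← boxW_append]
          exact Set.subset_iUnion_of_subset (t ++ [a]) le_rfl
    exact hleast H Hmono Heq X Y
  · -- each t-component is inside G X Y
    refine Set.iUnion_subset fun t => ?_
    induction t using List.reverseRecOn generalizing X Y with
    | nil =>
      rw [heq X Y]; exact Set.subset_union_left
    | append_singleton s a ih =>
      rw [diaW_append, boxW_append]
      refine (ih _ _).trans ?_
      rw [heq X Y]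
      exact Set.subset_union_of_subset_right (Set.subset_iUnion (fun a => G (dia1 tr1 a X) (box2 tr2 a Y)) a) _
end

section
/- Let G be the least function from pairs of subsets of S₁ × S₂ to subsets of S₁ × S₂, monotone in each argument, satisfying G X Y = (X ∩ Y) ∪ ⋃_{a ∈ Act} G (⟨a⟩₁X) ([a]₂Y) for all X, Y ⊆ S₁ × S₂. Then for all P ∈ S₁ and Q ∈ S₂: (P,Q) ∈ G (S₁ × S₂) ∅ if and only if there exists t ∈ T(P) with t ∉ T(Q), i.e. iff T(P) is not contained in T(Q). -/
/-- `P →^t Q` : the process `Q` is reachable from `P` via the word `t`. -/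
def Traces {S Act : Type*} (tr : S → Act → S → Prop) : S → List Act → S → Prop
  | p, [], q => p = q
  | p, a :: t, q => ∃ p', tr p a p' ∧ Traces tr p' t q

/-- `T(P)` : the set of finite traces of `P`. -/
def traceSet {S Act : Type*} (tr : S → Act → S → Prop) (P : S) : Set (List Act) :=
  {t | ∃ Q, Traces tr P t Q}

/-- Iterated diamond. -/
def DiaL {S₁ S₂ Act : Type*} (tr1 : S₁ → Act → S₁ → Prop) :
    List Act → Set (S₁ × S₂) → Set (S₁ × S₂)
  | [], X => X
  | a :: t, X => DiaL tr1 t (dia1 tr1 a X)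

/-- Iterated box. -/
def BoxL {S₁ S₂ Act : Type*} (tr2 : S₂ → Act → S₂ → Prop) :
    List Act → Set (S₁ × S₂) → Set (S₁ × S₂)
  | [], Y => Y
  | a :: t, Y => BoxL tr2 t (box2 tr2 a Y)

lemma traces_append {S Act : Type*} (tr : S → Act → S → Prop) (s t : List Act) :
    ∀ p q, Traces tr p (s ++ t) q ↔ ∃ r, Traces tr p s r ∧ Traces tr r t q := by
  induction s with
  | nil => intro p q; simp [Traces]
  | cons a s ih =>
      intro p q
      simp only [List.cons_append, Traces, List.append_eq, ih]
      constructor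
      · rintro ⟨p', h1, r, h2, h3⟩; exact ⟨r, ⟨p', h1, h2⟩, h3⟩
      · rintro ⟨r, ⟨p', h1, h2⟩, h3⟩; exact ⟨p', h1, r, h2, h3⟩

lemma diaL_mem {S₁ S₂ Act : Type*} (tr1 : S₁ → Act → S₁ → Prop) (t : List Act) :
    ∀ (X : Set (S₁ × S₂)) p q,
      (p, q) ∈ DiaL tr1 t X ↔ ∃ p', Traces tr1 p t.reverse p' ∧ (p', q) ∈ X := by
  induction t with
  | nil => intro X p q; simp [DiaL, Traces]
  | cons a t ih =>
      intro X p q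
      simp only [DiaL, ih, List.reverse_cons, traces_append, dia1, Traces,
        Set.mem_setOf_eq]
      constructor
      · rintro ⟨p', h1, p'', h3, h4⟩
        exact ⟨p'', ⟨p', h1, p'', h3, rfl⟩, h4⟩
      · rintro ⟨p'', ⟨p', h1, p''', h3, h2⟩, h4⟩
        subst h2
        exact ⟨p', h1, p''', h3, h4⟩

lemma boxL_mem {S₁ S₂ Act : Type*} (tr2 : S₂ → Act → S₂ → Prop) (t : List Act) :
    ∀ (Y : Set (S₁ × S₂)) p q,
      (p, q) ∈ BoxL tr2 t Y ↔ ∀ q', Traces tr2 q t.reverse q' → (p, q') ∈ Y := by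
  induction t with
  | nil => intro Y p q; simp [BoxL, Traces]
  | cons a t ih =>
      intro Y p q
      simp only [BoxL, ih, List.reverse_cons, traces_append, box2, Traces,
        Set.mem_setOf_eq]
      constructor
      · rintro h q' ⟨r, h1, q'', h2, h3⟩
        subst h3
        exact h r h1 q'' h2
      · rintro h q' h1 q'' h2
        exact h q'' ⟨q', h1, q'', h2, rfl⟩

lemma diaL_mono {S₁ S₂ Act : Type*} (tr1 : S₁ → Act → S₁ → Prop) (t : List Act) :
    ∀ (X X' : Set (S₁ × S₂)), X ⊆ X' → DiaL tr1 t X ⊆ DiaL tr1 t X' := by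
  induction t with
  | nil => intro X X' h; exact h
  | cons a t ih =>
      intro X X' h
      apply ih
      rintro ⟨p, q⟩ ⟨p', h1, h2⟩
      exact ⟨p', h1, h h2⟩

lemma boxL_mono {S₁ S₂ Act : Type*} (tr2 : S₂ → Act → S₂ → Prop) (t : List Act) :
    ∀ (Y Y' : Set (S₁ × S₂)), Y ⊆ Y' → BoxL tr2 t Y ⊆ BoxL tr2 t Y' := by
  induction t with
  | nil => intro Y Y' h; exact h
  | cons a t ih =>
      intro Y Y' h
      apply ih
      rintro ⟨p, q⟩ hm q' hq'
      exact h (hm q' hq')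

/-- if `G` is the least function, monotone in each argument, satisfying
`G X Y = (X ∩ Y) ∪ ⋃_{a ∈ Act} G (⟨a⟩₁X) ([a]₂Y)`, then `(P,Q) ∈ G (S₁ × S₂) ∅` iff
there is a trace `t ∈ T(P)` with `t ∉ T(Q)`. -/
theorem stmt_1 {S₁ S₂ Act : Type*} [Fintype Act]
    (tr1 : S₁ → Act → S₁ → Prop) (tr2 : S₂ → Act → S₂ → Prop)
    (G : Set (S₁ × S₂) → Set (S₁ × S₂) → Set (S₁ × S₂))
    (hmono : ∀ X X' Y Y', X ⊆ X' → Y ⊆ Y' → G X Y ⊆ G X' Y')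
    (heq : ∀ X Y, G X Y = (X ∩ Y) ∪ ⋃ a : Act, G (dia1 tr1 a X) (box2 tr2 a Y))
    (hleast : ∀ G' : Set (S₁ × S₂) → Set (S₁ × S₂) → Set (S₁ × S₂),
      (∀ X X' Y Y', X ⊆ X' → Y ⊆ Y' → G' X Y ⊆ G' X' Y') →
      (∀ X Y, G' X Y = (X ∩ Y) ∪ ⋃ a : Act, G' (dia1 tr1 a X) (box2 tr2 a Y)) →
      ∀ X Y, G X Y ⊆ G' X Y) :
    ∀ (P : S₁) (Q : S₂),
      (P, Q) ∈ G Set.univ ∅ ↔ ∃ t, t ∈ traceSet tr1 P ∧ t ∉ traceSet tr2 Q := by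
  -- The candidate least solution.
  set G' : Set (S₁ × S₂) → Set (S₁ × S₂) → Set (S₁ × S₂) :=
    fun X Y => ⋃ t : List Act, DiaL tr1 t X ∩ BoxL tr2 t Y with hG'
  have hmono' : ∀ X X' Y Y', X ⊆ X' → Y ⊆ Y' → G' X Y ⊆ G' X' Y' := by
    intro X X' Y Y' hX hY
    apply Set.iUnion_mono
    intro t
    exact Set.inter_subset_inter (diaL_mono tr1 t X X' hX) (boxL_mono tr2 t Y Y' hY)
  have heq' : ∀ X Y, G' X Y = (X ∩ Y) ∪ ⋃ a : Act, G' (dia1 tr1 a X) (box2 tr2 a Y) := by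
    intro X Y
    ext pq
    simp only [hG', Set.mem_iUnion, Set.mem_union, Set.mem_inter_iff]
    constructor
    · rintro ⟨t, h1, h2⟩
      cases t with
      | nil => exact Or.inl ⟨h1, h2⟩
      | cons a t => exact Or.inr ⟨a, t, h1, h2⟩
    · rintro (⟨h1, h2⟩ | ⟨a, t, h1, h2⟩)
      · exact ⟨[], h1, h2⟩
      · exact ⟨a :: t, h1, h2⟩
  -- G' ⊆ G.
  have hsub : ∀ t (X Y : Set (S₁ × S₂)), DiaL tr1 t X ∩ BoxL tr2 t Y ⊆ G X Y := by
    intro t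
    induction t with
    | nil =>
        intro X Y
        rw [heq X Y]
        exact Set.subset_union_left
    | cons a t ih =>
        intro X Y
        rw [heq X Y]
        refine Set.Subset.trans ?_ Set.subset_union_right
        refine Set.Subset.trans (ih (dia1 tr1 a X) (box2 tr2 a Y)) ?_
        exact Set.subset_iUnion (fun a => G (dia1 tr1 a X) (box2 tr2 a Y)) a
  intro P Q
  constructor
  · intro h
    have := hleast G' hmono' heq' Set.univ ∅ h
    simp only [hG', Set.mem_iUnion, Set.mem_inter_iff] at this
    obtain ⟨t, h1, h2⟩ := this
    rw [diaL_mem] at h1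
    rw [boxL_mem] at h2
    obtain ⟨p', hp', -⟩ := h1
    refine ⟨t.reverse, ⟨p', hp'⟩, ?_⟩
    rintro ⟨q', hq'⟩
    exact (h2 q' hq')
  · rintro ⟨t, ⟨p', hp'⟩, ht⟩
    apply hsub t.reverse Set.univ ∅
    constructor
    · rw [diaL_mem]
      exact ⟨p', by simpa using hp', trivial⟩
    · rw [boxL_mem]
      intro q' hq'
      exact absurd ⟨q', by simpa using hq'⟩ ht
end

section
/- Let G be the least function from pairs of subsets of S₁ × S₂ to subsets of S₁ × S₂, monotone in each argument, satisfying G X Y = (X ∩ Y) ∪ ⋃_{a ∈ Act} G (⟨a⟩₁X) ([a]₂Y) ∪ ⋃_{A ⊆ Act} G (X ∩ {(p,q) | I(p) ∩ A = ∅}) (Y ∪ {(p,q) | I(q) ∩ A ≠ ∅}) for all X, Y ⊆ S₁ × S₂. Then for all P ∈ S₁ and Q ∈ S₂: (P,Q) ∈ G (S₁ × S₂) ∅ if and only if there exists a failure trace u ∈ FT(P) with u ∉ FT(Q). -/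
/-- `I(P)` : the set of initial actions of `P`. -/
def initials {S Act : Type*} (tr : S → Act → S → Prop) (P : S) : Set Act :=
  {a | ∃ Q, tr P a Q}

/-- The failure-trace reachability relation `P →^u_ft Q` over words
`u ∈ (Act ∪ 2^Act)*` : reflexivity on the empty word, single actions,
refusal sets `A` with `I(P) ∩ A = ∅`, and closure under composition. -/
inductive FTrace {S Act : Type*} (tr : S → Act → S → Prop) :
    S → List (Act ⊕ Set Act) → S → Prop
  | refl (p : S) : FTrace tr p [] p
  | act {p q : S} {a : Act} : tr p a q → FTrace tr p [Sum.inl a] q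
  | refuse {p : S} {A : Set Act} : initials tr p ∩ A = ∅ → FTrace tr p [Sum.inr A] p
  | comp {p r q : S} {u u' : List (Act ⊕ Set Act)} :
      FTrace tr p u r → FTrace tr r u' q → FTrace tr p (u ++ u') q

/-- `FT(P)` : the set of failure traces of `P`. -/
def ftraceSet {S Act : Type*} (tr : S → Act → S → Prop) (P : S) :
    Set (List (Act ⊕ Set Act)) :=
  {u | ∃ Q, FTrace tr P u Q}

section Aux
variable {S Act : Type*} {tr : S → Act → S → Prop}

lemma snoc_eq_snoc' {α : Type*} {u v : List α} {x y : α} (h : u ++ [x] = v ++ [y]) :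
    u = v ∧ x = y := by
  have h2 := List.append_inj' h (by simp)
  exact ⟨h2.1, by simpa using h2.2⟩

lemma ftrace_nil' {p q : S} {u : List (Act ⊕ Set Act)}
    (h : FTrace tr p u q) : u = [] → p = q := by
  induction h with
  | refl p => intro _; rfl
  | act _ => simp
  | refuse _ => simp
  | comp h1 h2 ih1 ih2 =>
    intro he
    rcases List.append_eq_nil_iff.mp he with ⟨e1, e2⟩
    exact (ih1 e1).trans (ih2 e2)

lemma ftrace_nil {p q : S} (h : FTrace tr p [] q) : p = q := ftrace_nil' h rfl

lemma ftrace_snoc_act' {p q : S} {w : List (Act ⊕ Set Act)} (h : FTrace tr p w q) :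
    ∀ u (a : Act), w = u ++ [Sum.inl a] → ∃ r, FTrace tr p u r ∧ tr r a q := by
  induction h with
  | refl p => intro u a hw; exact absurd hw (by simp)
  | act ht =>
    intro u a hw
    have h2 := snoc_eq_snoc' (u := []) (by simpa using hw)
    refine ⟨_, h2.1 ▸ FTrace.refl _, ?_⟩
    obtain rfl : _ = a := Sum.inl.inj h2.2
    exact ht
  | refuse _ =>
    intro u a hw
    have h2 := snoc_eq_snoc' (u := []) (by simpa using hw)
    exact absurd h2.2 (by simp)
  | comp h1 h2 ih1 ih2 =>
    rename_i p r q u₁ u₂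
    intro u a hw
    rcases u₂.eq_nil_or_concat with rfl | ⟨v, y, rfl⟩
    · obtain rfl : r = q := ftrace_nil h2
      exact ih1 u a (by simpa using hw)
    · rw [List.concat_eq_append, ← List.append_assoc] at hw
      obtain ⟨rfl, rfl⟩ := snoc_eq_snoc' hw
      obtain ⟨s, hs, ha⟩ := ih2 v a (by simp)
      exact ⟨s, h1.comp hs, ha⟩

lemma ftrace_snoc_act {p q : S} {u : List (Act ⊕ Set Act)} {a : Act} :
    FTrace tr p (u ++ [Sum.inl a]) q ↔ ∃ r, FTrace tr p u r ∧ tr r a q := by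
  constructor
  · intro h; exact ftrace_snoc_act' h u a rfl
  · rintro ⟨r, hr, ha⟩; exact hr.comp (FTrace.act ha)

lemma ftrace_snoc_refuse' {p q : S} {w : List (Act ⊕ Set Act)} (h : FTrace tr p w q) :
    ∀ u (A : Set Act), w = u ++ [Sum.inr A] →
      FTrace tr p u q ∧ initials tr q ∩ A = ∅ := by
  induction h with
  | refl p => intro u A hw; exact absurd hw (by simp)
  | act ht =>
    intro u A hw
    have h2 := snoc_eq_snoc' (u := []) (by simpa using hw)
    exact absurd h2.2 (by simp)
  | refuse hA =>
    intro u A hw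
    have h2 := snoc_eq_snoc' (u := []) (by simpa using hw)
    obtain rfl := h2.1.symm
    obtain rfl : _ = A := Sum.inr.inj h2.2
    exact ⟨FTrace.refl _, hA⟩
  | comp h1 h2 ih1 ih2 =>
    rename_i p r q u₁ u₂
    intro u A hw
    rcases u₂.eq_nil_or_concat with rfl | ⟨v, y, rfl⟩
    · obtain rfl : r = q := ftrace_nil h2
      exact ih1 u A (by simpa using hw)
    · rw [List.concat_eq_append, ← List.append_assoc] at hw
      obtain ⟨rfl, rfl⟩ := snoc_eq_snoc' hw
      obtain ⟨hs, hA⟩ := ih2 v A (by simp)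
      exact ⟨h1.comp hs, hA⟩

lemma ftrace_snoc_refuse {p q : S} {u : List (Act ⊕ Set Act)} {A : Set Act} :
    FTrace tr p (u ++ [Sum.inr A]) q ↔ FTrace tr p u q ∧ initials tr q ∩ A = ∅ := by
  constructor
  · intro h; exact ftrace_snoc_refuse' h u A rfl
  · rintro ⟨hr, hA⟩; exact hr.comp (FTrace.refuse hA)

end Aux

section Key
variable {S₁ S₂ Act : Type*} {tr1 : S₁ → Act → S₁ → Prop} {tr2 : S₂ → Act → S₂ → Prop}

def Dset (tr1 : S₁ → Act → S₁ → Prop) (u : List (Act ⊕ Set Act))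
    (X : Set (S₁ × S₂)) : Set (S₁ × S₂) :=
  {pq | ∃ p', FTrace tr1 pq.1 u p' ∧ (p', pq.2) ∈ X}

def Bset (tr2 : S₂ → Act → S₂ → Prop) (u : List (Act ⊕ Set Act))
    (Y : Set (S₁ × S₂)) : Set (S₁ × S₂) :=
  {pq | ∀ q', FTrace tr2 pq.2 u q' → (pq.1, q') ∈ Y}

lemma Dset_nil (X : Set (S₁ × S₂)) : Dset (S₂ := S₂) tr1 [] X = X := by
  ext ⟨p, q⟩
  constructor
  · rintro ⟨p', hp, hX⟩; obtain rfl := ftrace_nil hp; exact hX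
  · intro hX; exact ⟨p, FTrace.refl p, hX⟩

lemma Bset_nil (Y : Set (S₁ × S₂)) : Bset (S₁ := S₁) tr2 [] Y = Y := by
  ext ⟨p, q⟩
  constructor
  · intro h; exact h q (FTrace.refl q)
  · intro hY q' hq'; obtain rfl := ftrace_nil hq'; exact hY

lemma Dset_snoc_act (u : List (Act ⊕ Set Act)) (a : Act) (X : Set (S₁ × S₂)) :
    Dset (S₂ := S₂) tr1 (u ++ [Sum.inl a]) X = Dset tr1 u (dia1 tr1 a X) := by
  ext ⟨p, q⟩
  constructor
  · rintro ⟨p', hp, hX⟩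
    obtain ⟨r, hr, ha⟩ := ftrace_snoc_act.mp hp
    exact ⟨r, hr, p', ha, hX⟩
  · rintro ⟨r, hr, p', ha, hX⟩
    exact ⟨p', ftrace_snoc_act.mpr ⟨r, hr, ha⟩, hX⟩

lemma Bset_snoc_act (u : List (Act ⊕ Set Act)) (a : Act) (Y : Set (S₁ × S₂)) :
    Bset (S₁ := S₁) tr2 (u ++ [Sum.inl a]) Y = Bset tr2 u (box2 tr2 a Y) := by
  ext ⟨p, q⟩
  constructor
  · intro h q₁ hq₁ q₂ hq₂
    exact h q₂ (ftrace_snoc_act.mpr ⟨q₁, hq₁, hq₂⟩)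
  · intro h q' hq'
    obtain ⟨q₁, hq₁, ha⟩ := ftrace_snoc_act.mp hq'
    exact h q₁ hq₁ q' ha

lemma Dset_snoc_refuse (u : List (Act ⊕ Set Act)) (A : Set Act) (X : Set (S₁ × S₂)) :
    Dset (S₂ := S₂) tr1 (u ++ [Sum.inr A]) X =
      Dset tr1 u (X ∩ {pq : S₁ × S₂ | initials tr1 pq.1 ∩ A = ∅}) := by
  ext ⟨p, q⟩
  constructor
  · rintro ⟨p', hp, hX⟩
    obtain ⟨hr, hA⟩ := ftrace_snoc_refuse.mp hp
    exact ⟨p', hr, hX, hA⟩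
  · rintro ⟨p', hp, hX, hA⟩
    exact ⟨p', ftrace_snoc_refuse.mpr ⟨hp, hA⟩, hX⟩

lemma Bset_snoc_refuse (u : List (Act ⊕ Set Act)) (A : Set Act) (Y : Set (S₁ × S₂)) :
    Bset (S₁ := S₁) tr2 (u ++ [Sum.inr A]) Y =
      Bset tr2 u (Y ∪ {pq : S₁ × S₂ | initials tr2 pq.2 ∩ A ≠ ∅}) := by
  ext ⟨p, q⟩
  constructor
  · intro h q₁ hq₁
    by_cases hA : initials tr2 q₁ ∩ A = ∅
    · exact Or.inl (h q₁ (ftrace_snoc_refuse.mpr ⟨hq₁, hA⟩))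
    · exact Or.inr hA
  · intro h q' hq'
    obtain ⟨hr, hA⟩ := ftrace_snoc_refuse.mp hq'
    rcases h q' hr with hY | hbad
    · exact hY
    · exact absurd hA hbad

lemma Dset_mono (u : List (Act ⊕ Set Act)) {X X' : Set (S₁ × S₂)} (h : X ⊆ X') :
    Dset (S₂ := S₂) tr1 u X ⊆ Dset tr1 u X' := by
  rintro ⟨p, q⟩ ⟨p', hp, hX⟩; exact ⟨p', hp, h hX⟩

lemma Bset_mono (u : List (Act ⊕ Set Act)) {Y Y' : Set (S₁ × S₂)} (h : Y ⊆ Y') :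
    Bset (S₁ := S₁) tr2 u Y ⊆ Bset tr2 u Y' := by
  rintro ⟨p, q⟩ hB q' hq'; exact h (hB q' hq')

end Key

/-- if `G` is the least function, monotone in each argument, satisfying
`G X Y = (X ∩ Y) ∪ ⋃_{a ∈ Act} G (⟨a⟩₁X) ([a]₂Y)
       ∪ ⋃_{A ⊆ Act} G (X ∩ {(p,q) | I(p) ∩ A = ∅}) (Y ∪ {(p,q) | I(q) ∩ A ≠ ∅})`,
then `(P,Q) ∈ G (S₁ × S₂) ∅` iff there is a failure trace `u ∈ FT(P)` with
`u ∉ FT(Q)`. -/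
theorem stmt_5 {S₁ S₂ Act : Type*} [Fintype Act]
    (tr1 : S₁ → Act → S₁ → Prop) (tr2 : S₂ → Act → S₂ → Prop)
    (G : Set (S₁ × S₂) → Set (S₁ × S₂) → Set (S₁ × S₂))
    (hmono : ∀ X X' Y Y', X ⊆ X' → Y ⊆ Y' → G X Y ⊆ G X' Y')
    (heq : ∀ X Y, G X Y =
      (X ∩ Y) ∪ (⋃ a : Act, G (dia1 tr1 a X) (box2 tr2 a Y)) ∪
        ⋃ A : Set Act, G (X ∩ {pq : S₁ × S₂ | initials tr1 pq.1 ∩ A = ∅})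
                         (Y ∪ {pq : S₁ × S₂ | initials tr2 pq.2 ∩ A ≠ ∅}))
    (hleast : ∀ G' : Set (S₁ × S₂) → Set (S₁ × S₂) → Set (S₁ × S₂),
      (∀ X X' Y Y', X ⊆ X' → Y ⊆ Y' → G' X Y ⊆ G' X' Y') →
      (∀ X Y, G' X Y =
        (X ∩ Y) ∪ (⋃ a : Act, G' (dia1 tr1 a X) (box2 tr2 a Y)) ∪
          ⋃ A : Set Act, G' (X ∩ {pq : S₁ × S₂ | initials tr1 pq.1 ∩ A = ∅})
                            (Y ∪ {pq : S₁ × S₂ | initials tr2 pq.2 ∩ A ≠ ∅})) →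
      ∀ X Y, G X Y ⊆ G' X Y) :
    ∀ (P : S₁) (Q : S₂),
      (P, Q) ∈ G Set.univ ∅ ↔ ∃ u, u ∈ ftraceSet tr1 P ∧ u ∉ ftraceSet tr2 Q := by
  -- the explicit "unrolled" least solution
  set G' : Set (S₁ × S₂) → Set (S₁ × S₂) → Set (S₁ × S₂) :=
    fun X Y => ⋃ u : List (Act ⊕ Set Act), Dset tr1 u X ∩ Bset tr2 u Y with hG'
  have hmono' : ∀ X X' Y Y', X ⊆ X' → Y ⊆ Y' → G' X Y ⊆ G' X' Y' := by
    intro X X' Y Y' hX hY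
    refine Set.iUnion_mono fun u => ?_
    exact Set.inter_subset_inter (Dset_mono u hX) (Bset_mono u hY)
  have heq' : ∀ X Y, G' X Y =
      (X ∩ Y) ∪ (⋃ a : Act, G' (dia1 tr1 a X) (box2 tr2 a Y)) ∪
        ⋃ A : Set Act, G' (X ∩ {pq : S₁ × S₂ | initials tr1 pq.1 ∩ A = ∅})
                          (Y ∪ {pq : S₁ × S₂ | initials tr2 pq.2 ∩ A ≠ ∅}) := by
    intro X Y
    apply Set.Subset.antisymm
    · refine Set.iUnion_subset fun u => ?_
      rcases u.eq_nil_or_concat with rfl | ⟨v, c, rfl⟩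
      · rw [Dset_nil, Bset_nil]; exact fun pq h => Or.inl (Or.inl h)
      · rw [List.concat_eq_append]
        rcases c with a | A
        · rw [Dset_snoc_act, Bset_snoc_act]
          intro pq h
          exact Or.inl (Or.inr (Set.mem_iUnion.mpr ⟨a, Set.mem_iUnion.mpr ⟨v, h⟩⟩))
        · rw [Dset_snoc_refuse, Bset_snoc_refuse]
          intro pq h
          exact Or.inr (Set.mem_iUnion.mpr ⟨A, Set.mem_iUnion.mpr ⟨v, h⟩⟩)
    · rintro pq (⟨h | h⟩ | h)
      · exact Set.mem_iUnion.mpr ⟨[], by rw [Dset_nil, Bset_nil]; exact h⟩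
      · obtain ⟨a, ha⟩ := Set.mem_iUnion.mp h
        obtain ⟨v, hv⟩ := Set.mem_iUnion.mp ha
        exact Set.mem_iUnion.mpr ⟨v ++ [Sum.inl a],
          by rw [Dset_snoc_act, Bset_snoc_act]; exact hv⟩
      · obtain ⟨A, hA⟩ := Set.mem_iUnion.mp h
        obtain ⟨v, hv⟩ := Set.mem_iUnion.mp hA
        exact Set.mem_iUnion.mpr ⟨v ++ [Sum.inr A],
          by rw [Dset_snoc_refuse, Bset_snoc_refuse]; exact hv⟩
  -- G' ⊆ G  (the unrolled solution is below any fixed point)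
  have hsub : ∀ u : List (Act ⊕ Set Act), ∀ X Y : Set (S₁ × S₂),
      Dset tr1 u X ∩ Bset tr2 u Y ⊆ G X Y := by
    intro u
    induction u using List.reverseRecOn with
    | nil =>
      intro X Y
      rw [Dset_nil, Bset_nil, heq X Y]
      exact fun pq h => Or.inl (Or.inl h)
    | append_singleton v c ih =>
      intro X Y
      rcases c with a | A
      · rw [Dset_snoc_act, Bset_snoc_act, heq X Y]
        intro pq h
        exact Or.inl (Or.inr (Set.mem_iUnion.mpr ⟨a, ih _ _ h⟩))
      · rw [Dset_snoc_refuse, Bset_snoc_refuse, heq X Y]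
        intro pq h
        exact Or.inr (Set.mem_iUnion.mpr ⟨A, ih _ _ h⟩)
  intro P Q
  constructor
  · intro h
    have := hleast G' hmono' heq' Set.univ ∅ h
    obtain ⟨u, hu⟩ := Set.mem_iUnion.mp this
    refine ⟨u, ?_, ?_⟩
    · obtain ⟨p', hp', _⟩ := hu.1
      exact ⟨p', hp'⟩
    · rintro ⟨q', hq'⟩
      exact hu.2 q' hq'
  · rintro ⟨u, ⟨P', hP⟩, hQ⟩
    refine hsub u Set.univ ∅ ⟨⟨P', hP, trivial⟩, ?_⟩
    intro q' hq'
    exact absurd ⟨q', hq'⟩ hQ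
end

section
/- Let G be the least function from pairs of subsets of S₁ × S₂ to subsets of S₁ × S₂, monotone in each argument, satisfying G X Y = (X ∩ Y) ∪ ⋃_{a ∈ Act} G (⟨a⟩₁X) ([a]₂Y) ∪ ⋃_{A ⊆ Act} G (X ∩ {(p,q) | I(p) = A}) (Y ∪ {(p,q) | I(q) ≠ A}) for all X, Y ⊆ S₁ × S₂. Then for all P ∈ S₁ and Q ∈ S₂: (P,Q) ∈ G (S₁ × S₂) ∅ if and only if there exists a ready trace u ∈ RT(P) with u ∉ RT(Q). -/
/-- The ready-trace reachability relation `P →^u_rt Q` over words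
`u ∈ (Act ∪ 2^Act)*` : reflexivity on the empty word, single actions,
ready sets `A` with `I(P) = A`, and closure under composition. -/
inductive RTrace {S Act : Type*} (tr : S → Act → S → Prop) :
    S → List (Act ⊕ Set Act) → S → Prop
  | refl (p : S) : RTrace tr p [] p
  | act {p q : S} {a : Act} : tr p a q → RTrace tr p [Sum.inl a] q
  | ready {p : S} {A : Set Act} : initials tr p = A → RTrace tr p [Sum.inr A] p
  | comp {p r q : S} {u u' : List (Act ⊕ Set Act)} :
      RTrace tr p u r → RTrace tr r u' q → RTrace tr p (u ++ u') q

/-- `RT(P)` : the set of ready traces of `P`. -/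
def rtraceSet {S Act : Type*} (tr : S → Act → S → Prop) (P : S) :
    Set (List (Act ⊕ Set Act)) :=
  {u | ∃ Q, RTrace tr P u Q}

section aux
variable {S Act : Type*} {tr : S → Act → S → Prop}

def RStep (tr : S → Act → S → Prop) : S → (Act ⊕ Set Act) → S → Prop
  | p, Sum.inl a, q => tr p a q
  | p, Sum.inr A, q => p = q ∧ initials tr p = A

lemma rtrace_cases {p q : S} {u : List (Act ⊕ Set Act)} (h : RTrace tr p u q) :
    (u = [] ∧ p = q) ∨
      ∃ u' e r, u = u' ++ [e] ∧ RTrace tr p u' r ∧ RStep tr r e q := by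
  induction h with
  | refl p => exact Or.inl ⟨rfl, rfl⟩
  | act h => exact Or.inr ⟨[], _, _, rfl, RTrace.refl _, h⟩
  | ready h => exact Or.inr ⟨[], _, _, rfl, RTrace.refl _, rfl, h⟩
  | comp h1 h2 ih1 ih2 =>
    rcases ih2 with ⟨rfl, rfl⟩ | ⟨u'', e, s, rfl, h3, h4⟩
    · simpa using ih1
    · exact Or.inr ⟨_, e, s, by simp, h1.comp h3, h4⟩

lemma rtrace_nil {p q : S} (h : RTrace tr p [] q) : p = q := by
  rcases rtrace_cases h with ⟨_, rfl⟩ | ⟨u', e, r, h1, _⟩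
  · rfl
  · simp at h1

lemma rtrace_concat {p q : S} {u : List (Act ⊕ Set Act)} {e : Act ⊕ Set Act}
    (h : RTrace tr p (u ++ [e]) q) : ∃ r, RTrace tr p u r ∧ RStep tr r e q := by
  rcases rtrace_cases h with ⟨h1, _⟩ | ⟨u', e', r, h1, h2, h3⟩
  · simp at h1
  · have := congrArg List.reverse h1
    simp at this
    obtain ⟨rfl, rfl⟩ := this
    exact ⟨r, h2, h3⟩

lemma rstep_rtrace {p q : S} {e : Act ⊕ Set Act} (h : RStep tr p e q) :
    RTrace tr p [e] q := by
  cases e with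
  | inl a => exact RTrace.act h
  | inr A => obtain ⟨rfl, h⟩ := h; exact RTrace.ready h

end aux
section main
variable {S₁ S₂ Act : Type*} (tr1 : S₁ → Act → S₁ → Prop) (tr2 : S₂ → Act → S₂ → Prop)

/-- Explicit description of the least solution. -/
def Gdef (X Y : Set (S₁ × S₂)) : Set (S₁ × S₂) :=
  {pq | ∃ u, (∃ p', RTrace tr1 pq.1 u p' ∧ (p', pq.2) ∈ X) ∧
        ∀ q', RTrace tr2 pq.2 u q' → (pq.1, q') ∈ Y}

lemma Gdef_mono : ∀ X X' Y Y' : Set (S₁ × S₂), X ⊆ X' → Y ⊆ Y' →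
    Gdef tr1 tr2 X Y ⊆ Gdef tr1 tr2 X' Y' := by
  rintro X X' Y Y' hX hY ⟨p, q⟩ ⟨u, ⟨p', h1, h2⟩, h3⟩
  exact ⟨u, ⟨p', h1, hX h2⟩, fun q' hq' => hY (h3 q' hq')⟩

lemma Gdef_eq : ∀ X Y : Set (S₁ × S₂), Gdef tr1 tr2 X Y =
    (X ∩ Y) ∪ (⋃ a : Act, Gdef tr1 tr2 (dia1 tr1 a X) (box2 tr2 a Y)) ∪
      ⋃ A : Set Act, Gdef tr1 tr2 (X ∩ {pq : S₁ × S₂ | initials tr1 pq.1 = A})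
                       (Y ∪ {pq : S₁ × S₂ | initials tr2 pq.2 ≠ A}) := by
  intro X Y
  ext ⟨p, q⟩
  constructor
  · rintro ⟨u, ⟨p', h1, h2⟩, h3⟩
    rcases List.eq_nil_or_concat u with rfl | ⟨u', e, rfl⟩
    · cases rtrace_nil h1
      exact Or.inl (Or.inl ⟨h2, h3 q (RTrace.refl q)⟩)
    · rw [List.concat_eq_append] at h1 h3
      obtain ⟨r, hr1, hr2⟩ := rtrace_concat h1
      cases e with
      | inl a =>
        refine Or.inl (Or.inr (Set.mem_iUnion.2 ⟨a, u', ⟨r, hr1, ⟨p', hr2, h2⟩⟩,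
          fun q' hq' q'' hq'' => h3 q'' ?_⟩))
        exact hq'.comp (RTrace.act hq'')
      | inr A =>
        obtain ⟨rfl, hA⟩ := hr2
        refine Or.inr (Set.mem_iUnion.2 ⟨A, u', ⟨r, hr1, h2, hA⟩, fun q' hq' => ?_⟩)
        by_cases hI : initials tr2 q' = A
        · exact Or.inl (h3 q' (hq'.comp (RTrace.ready hI)))
        · exact Or.inr hI
  · rintro ((⟨h1, h2⟩ | h) | h)
    · exact ⟨[], ⟨p, RTrace.refl p, h1⟩, fun q' hq' => by cases rtrace_nil hq'; exact h2⟩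
    · obtain ⟨a, u, ⟨p', h1, p'', h2, h3⟩, h4⟩ := Set.mem_iUnion.1 h
      refine ⟨u ++ [Sum.inl a], ⟨p'', h1.comp (RTrace.act h2), h3⟩, ?_⟩
      intro q' hq'
      obtain ⟨r, hr1, hr2⟩ := rtrace_concat hq'
      exact h4 r hr1 q' hr2
    · obtain ⟨A, u, ⟨p', h1, h2, h3⟩, h4⟩ := Set.mem_iUnion.1 h
      refine ⟨u ++ [Sum.inr A], ⟨p', h1.comp (RTrace.ready h3), h2⟩, ?_⟩
      intro q' hq'
      obtain ⟨r, hr1, ⟨rfl, hr3⟩⟩ := rtrace_concat hq'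
      rcases h4 r hr1 with h | h
      · exact h
      · exact absurd hr3 h

end main


/-- if `G` is the least function, monotone in each argument, satisfying
`G X Y = (X ∩ Y) ∪ ⋃_{a ∈ Act} G (⟨a⟩₁X) ([a]₂Y)
       ∪ ⋃_{A ⊆ Act} G (X ∩ {(p,q) | I(p) = A}) (Y ∪ {(p,q) | I(q) ≠ A})`,
then `(P,Q) ∈ G (S₁ × S₂) ∅` iff there is a ready trace `u ∈ RT(P)` with
`u ∉ RT(Q)`. -/
theorem stmt_6 {S₁ S₂ Act : Type*} [Fintype Act]
    (tr1 : S₁ → Act → S₁ → Prop) (tr2 : S₂ → Act → S₂ → Prop)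
    (G : Set (S₁ × S₂) → Set (S₁ × S₂) → Set (S₁ × S₂))
    (hmono : ∀ X X' Y Y', X ⊆ X' → Y ⊆ Y' → G X Y ⊆ G X' Y')
    (heq : ∀ X Y, G X Y =
      (X ∩ Y) ∪ (⋃ a : Act, G (dia1 tr1 a X) (box2 tr2 a Y)) ∪
        ⋃ A : Set Act, G (X ∩ {pq : S₁ × S₂ | initials tr1 pq.1 = A})
                         (Y ∪ {pq : S₁ × S₂ | initials tr2 pq.2 ≠ A}))
    (hleast : ∀ G' : Set (S₁ × S₂) → Set (S₁ × S₂) → Set (S₁ × S₂),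
      (∀ X X' Y Y', X ⊆ X' → Y ⊆ Y' → G' X Y ⊆ G' X' Y') →
      (∀ X Y, G' X Y =
        (X ∩ Y) ∪ (⋃ a : Act, G' (dia1 tr1 a X) (box2 tr2 a Y)) ∪
          ⋃ A : Set Act, G' (X ∩ {pq : S₁ × S₂ | initials tr1 pq.1 = A})
                            (Y ∪ {pq : S₁ × S₂ | initials tr2 pq.2 ≠ A})) →
      ∀ X Y, G X Y ⊆ G' X Y) :
    ∀ (P : S₁) (Q : S₂),
      (P, Q) ∈ G Set.univ ∅ ↔ ∃ u, u ∈ rtraceSet tr1 P ∧ u ∉ rtraceSet tr2 Q := by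
  intro P Q
  constructor
  · intro h
    have h' := hleast (Gdef tr1 tr2) (Gdef_mono tr1 tr2) (Gdef_eq tr1 tr2) Set.univ ∅ h
    obtain ⟨u, ⟨p', h1, _⟩, h3⟩ := h'
    exact ⟨u, ⟨p', h1⟩, fun ⟨q', hq'⟩ => h3 q' hq'⟩
  · rintro ⟨u, ⟨P', hP⟩, hQ⟩
    have key : ∀ u : List (Act ⊕ Set Act), ∀ X Y : Set (S₁ × S₂), ∀ p q,
        (∃ p', RTrace tr1 p u p' ∧ (p', q) ∈ X) →
        (∀ q', RTrace tr2 q u q' → (p, q') ∈ Y) → (p, q) ∈ G X Y := by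
      intro u
      induction u using List.reverseRecOn with
      | nil =>
        rintro X Y p q ⟨p', h1, h2⟩ h3
        cases rtrace_nil h1
        rw [heq]
        exact Or.inl (Or.inl ⟨h2, h3 q (RTrace.refl q)⟩)
      | append_singleton u e ih =>
        rintro X Y p q ⟨p', h1, h2⟩ h3
        obtain ⟨r, hr1, hr2⟩ := rtrace_concat h1
        rw [heq]
        cases e with
        | inl a =>
          refine Or.inl (Or.inr (Set.mem_iUnion.2
            ⟨a, ih _ _ p q ⟨r, hr1, p', hr2, h2⟩ ?_⟩))
          exact fun q' hq' q'' hq'' => h3 q'' (hq'.comp (RTrace.act hq''))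
        | inr A =>
          obtain ⟨rfl, hA⟩ := hr2
          refine Or.inr (Set.mem_iUnion.2 ⟨A, ih _ _ p q ⟨r, hr1, h2, hA⟩ ?_⟩)
          intro q' hq'
          by_cases hI : initials tr2 q' = A
          · exact Or.inl (h3 q' (hq'.comp (RTrace.ready hI)))
          · exact Or.inr hI
    exact key u Set.univ ∅ P Q ⟨P', hP, trivial⟩ (fun q' hq' => absurd ⟨q', hq'⟩ hQ)
end

section
/- Let L ⊆ S₁ × S₂ be the least fixed point of the monotone operator X ↦ ⋃_{a ∈ Act} ⟨a⟩₁[a]₂X on the powerset of S₁ × S₂. Then for all P ∈ S₁ and Q ∈ S₂: (P,Q) ∉ L if and only if there exists a simulation R ⊆ S₁ × S₂ with (P,Q) ∈ R. -/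
/-- `R` is a simulation between the LTS with transitions `tr1` and the LTS with
transitions `tr2`. -/
def IsSimulation {S₁ S₂ Act : Type*} (tr1 : S₁ → Act → S₁ → Prop)
    (tr2 : S₂ → Act → S₂ → Prop) (R : Set (S₁ × S₂)) : Prop :=
  ∀ (a : Act) (p : S₁) (q : S₂) (p' : S₁), (p, q) ∈ R → tr1 p a p' →
    ∃ q', tr2 q a q' ∧ (p', q') ∈ R

/-- if `L` is the least fixed point of `X ↦ ⋃_{a ∈ Act} ⟨a⟩₁[a]₂X`,
then `(P,Q) ∉ L` iff some simulation contains `(P,Q)`. -/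
theorem stmt_7 {S₁ S₂ Act : Type*} [Fintype Act]
    (tr1 : S₁ → Act → S₁ → Prop) (tr2 : S₂ → Act → S₂ → Prop)
    (L : Set (S₁ × S₂))
    (hfix : L = ⋃ a : Act, dia1 tr1 a (box2 tr2 a L))
    (hleast : ∀ X : Set (S₁ × S₂), X = ⋃ a : Act, dia1 tr1 a (box2 tr2 a X) → L ⊆ X) :
    ∀ (P : S₁) (Q : S₂),
      (P, Q) ∉ L ↔ ∃ R : Set (S₁ × S₂), IsSimulation tr1 tr2 R ∧ (P, Q) ∈ R := by
  have Fmono : Monotone (fun X : Set (S₁ × S₂) => ⋃ a : Act, dia1 tr1 a (box2 tr2 a X)) := by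
    intro X Y hXY pq hpq
    simp only [Set.mem_iUnion] at hpq ⊢
    obtain ⟨a, p', hp, hbox⟩ := hpq
    exact ⟨a, p', hp, fun q' hq' => hXY (hbox q' hq')⟩
  set F : Set (S₁ × S₂) →o Set (S₁ × S₂) :=
    ⟨fun X => ⋃ a : Act, dia1 tr1 a (box2 tr2 a X), Fmono⟩ with hFdef
  have hLlfp : L = OrderHom.lfp F := by
    apply le_antisymm
    · exact hleast _ (OrderHom.map_lfp F).symm
    · exact OrderHom.lfp_le F (le_of_eq hfix.symm)
  intro P Q
  constructor
  · intro hPQ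
    refine ⟨Lᶜ, ?_, hPQ⟩
    intro a p q p' hpq hp
    by_contra h
    push_neg at h
    apply hpq
    rw [hfix]
    refine Set.mem_iUnion.2 ⟨a, p', hp, fun q' hq' => ?_⟩
    simpa using h q' hq'
  · rintro ⟨R, hR, hPQR⟩
    intro hPQL
    have hpre : F Rᶜ ≤ Rᶜ := by
      intro pq hpq
      simp only [hFdef, OrderHom.coe_mk, Set.mem_iUnion] at hpq
      obtain ⟨a, p', hp, hbox⟩ := hpq
      intro hpqR
      obtain ⟨q', hq', hR'⟩ := hR a pq.1 pq.2 p' hpqR hp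
      exact hbox q' hq' hR'
    have : (P, Q) ∈ Rᶜ := (hLlfp ▸ OrderHom.lfp_le F hpre) hPQL
    exact this hPQR
end

section
/- Let Test := {(p,q) ∈ S₁ × S₂ | exactly one of I(p) = ∅ and I(q) = ∅ holds}, and let L ⊆ S₁ × S₂ be the least fixed point of the monotone operator X ↦ Test ∪ ⋃_{a ∈ Act} ⟨a⟩₁[a]₂X on the powerset of S₁ × S₂. Then for all P ∈ S₁ and Q ∈ S₂: (P,Q) ∉ L if and only if there exists a completed simulation R ⊆ S₁ × S₂ with (P,Q) ∈ R. -/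
/-- `R` is a completed simulation : a simulation such that related states agree on
being deadlocked. -/
def IsCompletedSimulation {S₁ S₂ Act : Type*} (tr1 : S₁ → Act → S₁ → Prop)
    (tr2 : S₂ → Act → S₂ → Prop) (R : Set (S₁ × S₂)) : Prop :=
  (∀ (a : Act) (p : S₁) (q : S₂) (p' : S₁), (p, q) ∈ R → tr1 p a p' →
    ∃ q', tr2 q a q' ∧ (p', q') ∈ R) ∧
  ∀ (p : S₁) (q : S₂), (p, q) ∈ R → (initials tr1 p = ∅ ↔ initials tr2 q = ∅)

/-- with `Test = {(p,q) | exactly one of I(p) = ∅, I(q) = ∅}`, if `L` is the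
least fixed point of `X ↦ Test ∪ ⋃_{a ∈ Act} ⟨a⟩₁[a]₂X`, then `(P,Q) ∉ L` iff some
completed simulation contains `(P,Q)`. -/
theorem stmt_8 {S₁ S₂ Act : Type*} [Fintype Act]
    (tr1 : S₁ → Act → S₁ → Prop) (tr2 : S₂ → Act → S₂ → Prop)
    (Test : Set (S₁ × S₂))
    (hTest : Test = {pq : S₁ × S₂ | Xor' (initials tr1 pq.1 = ∅) (initials tr2 pq.2 = ∅)})
    (L : Set (S₁ × S₂))
    (hfix : L = Test ∪ ⋃ a : Act, dia1 tr1 a (box2 tr2 a L))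
    (hleast : ∀ X : Set (S₁ × S₂),
      X = Test ∪ ⋃ a : Act, dia1 tr1 a (box2 tr2 a X) → L ⊆ X) :
    ∀ (P : S₁) (Q : S₂),
      (P, Q) ∉ L ↔ ∃ R : Set (S₁ × S₂), IsCompletedSimulation tr1 tr2 R ∧ (P, Q) ∈ R := by
  classical
  set F : Set (S₁ × S₂) →o Set (S₁ × S₂) :=
    ⟨fun X => Test ∪ ⋃ a : Act, dia1 tr1 a (box2 tr2 a X), by
      intro X Y hXY
      apply Set.union_subset_union_right
      apply Set.iUnion_mono
      rintro a pq ⟨p', hp', hb⟩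
      exact ⟨p', hp', fun q' hq' => hXY (hb q' hq')⟩⟩ with hF
  have hLeq : L = OrderHom.lfp F := by
    apply subset_antisymm
    · exact hleast _ (OrderHom.map_lfp F).symm
    · exact OrderHom.lfp_le F (le_of_eq hfix.symm)
  intro P Q
  constructor
  · intro hPQ
    refine ⟨Lᶜ, ⟨?_, ?_⟩, hPQ⟩
    · intro a p q p' hpq hstep
      have hmem : (p, q) ∉ Test ∪ ⋃ a : Act, dia1 tr1 a (box2 tr2 a L) := hfix ▸ hpq
      have hnd : (p, q) ∉ dia1 tr1 a (box2 tr2 a L) :=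
        fun h => hmem (Or.inr (Set.mem_iUnion.2 ⟨a, h⟩))
      by_contra hcon
      push_neg at hcon
      exact hnd ⟨p', hstep, fun q' hq' => not_not.1 (hcon q' hq')⟩
    · intro p q hpq
      have hnt : (p, q) ∉ Test := fun h => hpq (hfix ▸ Or.inl h)
      rw [hTest] at hnt
      simp only [Set.mem_setOf_eq, Xor', Xor] at hnt
      tauto
  · rintro ⟨R, ⟨hsim, hdead⟩, hPQR⟩
    have hpre : F Rᶜ ≤ Rᶜ := by
      rintro ⟨p, q⟩ h hR
      rcases h with h | h
      · rw [hTest] at h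
        rcases h with ⟨h1, h2⟩ | ⟨h1, h2⟩
        · exact h2 ((hdead p q hR).1 h1)
        · exact h2 ((hdead p q hR).2 h1)
      · rw [Set.mem_iUnion] at h
        obtain ⟨a, p', hp', hb⟩ := h
        obtain ⟨q', hq', hR'⟩ := hsim a p q p' hR hp'
        exact hb q' hq' hR'
    have hsub : L ⊆ Rᶜ := hLeq ▸ OrderHom.lfp_le F hpre
    exact fun hL => hsub hL hPQR
end

section
/- Let Test := {(p,q) ∈ S₁ × S₂ | I(p) ≠ I(q)}, and let L ⊆ S₁ × S₂ be the least fixed point of the monotone operator X ↦ Test ∪ ⋃_{a ∈ Act} ⟨a⟩₁[a]₂X on the powerset of S₁ × S₂. Then for all P ∈ S₁ and Q ∈ S₂: (P,Q) ∉ L if and only if there exists a ready simulation R ⊆ S₁ × S₂ with (P,Q) ∈ R. -/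
/-- `R` is a ready simulation : a simulation such that related states have the same
set of initial actions. -/
def IsReadySimulation {S₁ S₂ Act : Type*} (tr1 : S₁ → Act → S₁ → Prop)
    (tr2 : S₂ → Act → S₂ → Prop) (R : Set (S₁ × S₂)) : Prop :=
  (∀ (a : Act) (p : S₁) (q : S₂) (p' : S₁), (p, q) ∈ R → tr1 p a p' →
    ∃ q', tr2 q a q' ∧ (p', q') ∈ R) ∧
  ∀ (p : S₁) (q : S₂), (p, q) ∈ R → initials tr1 p = initials tr2 q

/-- with `Test = {(p,q) | I(p) ≠ I(q)}`, if `L` is the least fixed point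
of `X ↦ Test ∪ ⋃_{a ∈ Act} ⟨a⟩₁[a]₂X`, then `(P,Q) ∉ L` iff some ready simulation
contains `(P,Q)`. -/
theorem stmt_9 {S₁ S₂ Act : Type*} [Fintype Act]
    (tr1 : S₁ → Act → S₁ → Prop) (tr2 : S₂ → Act → S₂ → Prop)
    (Test : Set (S₁ × S₂))
    (hTest : Test = {pq : S₁ × S₂ | initials tr1 pq.1 ≠ initials tr2 pq.2})
    (L : Set (S₁ × S₂))
    (hfix : L = Test ∪ ⋃ a : Act, dia1 tr1 a (box2 tr2 a L))
    (hleast : ∀ X : Set (S₁ × S₂),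
      X = Test ∪ ⋃ a : Act, dia1 tr1 a (box2 tr2 a X) → L ⊆ X) :
    ∀ (P : S₁) (Q : S₂),
      (P, Q) ∉ L ↔ ∃ R : Set (S₁ × S₂), IsReadySimulation tr1 tr2 R ∧ (P, Q) ∈ R := by
  -- The monotone operator
  set F : Set (S₁ × S₂) →o Set (S₁ × S₂) :=
    ⟨fun X => Test ∪ ⋃ a : Act, dia1 tr1 a (box2 tr2 a X), by
      intro X Y hXY
      apply Set.union_subset_union_right
      intro pq hpq
      simp only [Set.mem_iUnion] at hpq ⊢
      obtain ⟨a, p', hp', hbox⟩ := hpq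
      exact ⟨a, p', hp', fun q' hq' => hXY (hbox q' hq')⟩⟩ with hF
  have hLfix : F L = L := by rw [hF]; exact hfix.symm
  -- L equals the least fixed point
  have hLlfp : L = OrderHom.lfp F := by
    apply le_antisymm
    · exact hleast _ (OrderHom.map_lfp F).symm
    · exact OrderHom.lfp_le F (le_of_eq hLfix)
  intro P Q
  constructor
  · -- (P,Q) ∉ L : take R = Lᶜ
    intro hPQ
    refine ⟨Lᶜ, ⟨?_, ?_⟩, hPQ⟩
    · intro a p q p' hpq hp'
      by_contra h
      push_neg at h
      apply hpq
      rw [hfix]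
      right
      simp only [Set.mem_iUnion]
      exact ⟨a, p', hp', fun q' hq' => by
        have := h q' hq'
        simpa using this⟩
    · intro p q hpq
      by_contra hne
      apply hpq
      rw [hfix]
      left
      rw [hTest]
      exact hne
  · -- R ready simulation containing (P,Q) implies (P,Q) ∉ L
    rintro ⟨R, ⟨hsim, hinit⟩, hPQ⟩
    have hpre : F Rᶜ ≤ Rᶜ := by
      rintro ⟨p, q⟩ hpq hR
      rcases hpq with hT | hD
      · rw [hTest] at hT
        exact hT (hinit p q hR)
      · simp only [Set.mem_iUnion] at hD
        obtain ⟨a, p', hp', hbox⟩ := hD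
        obtain ⟨q', hq', hR'⟩ := hsim a p q p' hR hp'
        exact hbox q' hq' hR'
    have : L ⊆ Rᶜ := hLlfp ▸ OrderHom.lfp_le F hpre
    intro hL
    exact this hL hPQ
end

section
/- Let Test := {(p,q) ∈ S₁ × S₂ | there is no simulation R' ⊆ S₂ × S₁ from T₂ to T₁ with (q,p) ∈ R'}, and let L ⊆ S₁ × S₂ be the least fixed point of the monotone operator X ↦ Test ∪ ⋃_{a ∈ Act} ⟨a⟩₁[a]₂X on the powerset of S₁ × S₂. Then for all P ∈ S₁ and Q ∈ S₂: (P,Q) ∉ L if and only if there exists a relation R ⊆ S₁ × S₂ with (P,Q) ∈ R such that R is a simulation from T₁ to T₂ and for every (p,q) ∈ R there is a simulation R'' ⊆ S₂ × S₁ from T₂ to T₁ with (q,p) ∈ R''. -/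
/-- with `Test = {(p,q) | no simulation from T₂ to T₁ contains (q,p)}`,
if `L` is the least fixed point of `X ↦ Test ∪ ⋃_{a ∈ Act} ⟨a⟩₁[a]₂X`, then
`(P,Q) ∉ L` iff there is a relation `R ∋ (P,Q)` which is a simulation from `T₁` to `T₂`
such that for every `(p,q) ∈ R` some simulation from `T₂` to `T₁` contains `(q,p)`. -/
theorem stmt_10 {S₁ S₂ Act : Type*} [Fintype Act]
    (tr1 : S₁ → Act → S₁ → Prop) (tr2 : S₂ → Act → S₂ → Prop)
    (Test : Set (S₁ × S₂))
    (hTest : Test = {pq : S₁ × S₂ |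
      ¬ ∃ R' : Set (S₂ × S₁), IsSimulation tr2 tr1 R' ∧ (pq.2, pq.1) ∈ R'})
    (L : Set (S₁ × S₂))
    (hfix : L = Test ∪ ⋃ a : Act, dia1 tr1 a (box2 tr2 a L))
    (hleast : ∀ X : Set (S₁ × S₂),
      X = Test ∪ ⋃ a : Act, dia1 tr1 a (box2 tr2 a X) → L ⊆ X) :
    ∀ (P : S₁) (Q : S₂),
      (P, Q) ∉ L ↔ ∃ R : Set (S₁ × S₂), (P, Q) ∈ R ∧ IsSimulation tr1 tr2 R ∧
        ∀ pq ∈ R, ∃ R'' : Set (S₂ × S₁),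
          IsSimulation tr2 tr1 R'' ∧ (Prod.snd pq, Prod.fst pq) ∈ R'' := by
  -- the monotone operator
  set F : Set (S₁ × S₂) →o Set (S₁ × S₂) :=
    ⟨fun X => Test ∪ ⋃ a : Act, dia1 tr1 a (box2 tr2 a X), by
      intro X Y hXY
      apply Set.union_subset_union_right
      apply Set.iUnion_mono
      intro a pq ⟨p', hp', hbox⟩
      exact ⟨p', hp', fun q' hq' => hXY (hbox q' hq')⟩⟩ with hF
  have hLlfp : L = OrderHom.lfp F := by
    apply le_antisymm
    · exact hleast _ (OrderHom.map_lfp F).symm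
    · exact OrderHom.lfp_le F (le_of_eq hfix.symm)
  intro P Q
  constructor
  · intro hPQ
    refine ⟨Lᶜ, hPQ, ?_, ?_⟩
    · intro a p q p' hpq hpp'
      by_contra hcon
      push_neg at hcon
      apply hpq
      rw [hfix]
      right
      exact Set.mem_iUnion.2 ⟨a, p', hpp', fun q' hq' => not_not.1 (hcon q' hq')⟩
    · intro pq hpq
      by_contra h
      apply hpq
      rw [hfix]
      left
      rw [hTest]
      exact h
  · rintro ⟨R, hPQR, hsim, hrev⟩
    have hpre : F Rᶜ ≤ Rᶜ := by
      rintro ⟨p, q⟩ hpq hR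
      rcases hpq with hT | hD
      · rw [hTest] at hT
        exact hT (hrev _ hR)
      · rcases Set.mem_iUnion.1 hD with ⟨a, p', hpp', hbox⟩
        rcases hsim a p q p' hR hpp' with ⟨q', hqq', hR'⟩
        exact hbox q' hqq' hR'
    have : L ⊆ Rᶜ := hLlfp ▸ OrderHom.lfp_le F hpre
    exact fun hL => this hL hPQR
end

section
/- Let L ⊆ S₁ × S₂ be the least fixed point of the monotone operator X ↦ ⋃_{a ∈ Act} (⟨a⟩₁[a]₂X ∪ ⟨a⟩₂[a]₁X) on the powerset of S₁ × S₂. Then for all P ∈ S₁ and Q ∈ S₂: (P,Q) ∉ L if and only if there exists a bisimulation R ⊆ S₁ × S₂ with (P,Q) ∈ R, i.e. iff P and Q are bisimilar. -/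
/-- `⟨a⟩₂X = {(p,q) | ∃ q', q →₂^a q' ∧ (p,q') ∈ X}`. -/
def dia2 {S₁ S₂ Act : Type*} (tr2 : S₂ → Act → S₂ → Prop) (a : Act)
    (X : Set (S₁ × S₂)) : Set (S₁ × S₂) :=
  {pq | ∃ q', tr2 pq.2 a q' ∧ (pq.1, q') ∈ X}

/-- `[a]₁X = {(p,q) | ∀ p', p →₁^a p' → (p',q) ∈ X}`. -/
def box1 {S₁ S₂ Act : Type*} (tr1 : S₁ → Act → S₁ → Prop) (a : Act)
    (Y : Set (S₁ × S₂)) : Set (S₁ × S₂) :=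
  {pq | ∀ p', tr1 pq.1 a p' → (p', pq.2) ∈ Y}

/-- `R` is a bisimulation between the two LTS. -/
def IsBisimulation {S₁ S₂ Act : Type*} (tr1 : S₁ → Act → S₁ → Prop)
    (tr2 : S₂ → Act → S₂ → Prop) (R : Set (S₁ × S₂)) : Prop :=
  (∀ (a : Act) (p : S₁) (q : S₂) (p' : S₁), (p, q) ∈ R → tr1 p a p' →
    ∃ q', tr2 q a q' ∧ (p', q') ∈ R) ∧
  (∀ (a : Act) (p : S₁) (q : S₂) (q' : S₂), (p, q) ∈ R → tr2 q a q' →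
    ∃ p', tr1 p a p' ∧ (p', q') ∈ R)

/-- if `L` is the least fixed point of
`X ↦ ⋃_{a ∈ Act} (⟨a⟩₁[a]₂X ∪ ⟨a⟩₂[a]₁X)`, then `(P,Q) ∉ L` iff some bisimulation
contains `(P,Q)`, i.e. iff `P` and `Q` are bisimilar. -/
theorem stmt_11 {S₁ S₂ Act : Type*} [Fintype Act]
    (tr1 : S₁ → Act → S₁ → Prop) (tr2 : S₂ → Act → S₂ → Prop)
    (L : Set (S₁ × S₂))
    (hfix : L = ⋃ a : Act, (dia1 tr1 a (box2 tr2 a L) ∪ dia2 tr2 a (box1 tr1 a L)))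
    (hleast : ∀ X : Set (S₁ × S₂),
      X = (⋃ a : Act, (dia1 tr1 a (box2 tr2 a X) ∪ dia2 tr2 a (box1 tr1 a X))) → L ⊆ X) :
    ∀ (P : S₁) (Q : S₂),
      (P, Q) ∉ L ↔ ∃ R : Set (S₁ × S₂), IsBisimulation tr1 tr2 R ∧ (P, Q) ∈ R := by

  classical
  -- `Lᶜ` is a bisimulation (used for the forward direction)
  have h4 : IsBisimulation tr1 tr2 Lᶜ := by
    constructor
    · intro a p q p' hpq htr
      have hni : (p, q) ∉ dia1 tr1 a (box2 tr2 a L) := by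
        intro h
        exact hpq (hfix ▸ Set.mem_iUnion.2 ⟨a, Or.inl h⟩)
      have hx : (p', q) ∉ box2 tr2 a L := fun hb => hni ⟨p', htr, hb⟩
      simp only [box2, Set.mem_setOf_eq, not_forall] at hx
      obtain ⟨q', hq', hmem⟩ := hx
      exact ⟨q', hq', hmem⟩
    · intro a p q q' hpq htr
      have hni : (p, q) ∉ dia2 tr2 a (box1 tr1 a L) := by
        intro h
        exact hpq (hfix ▸ Set.mem_iUnion.2 ⟨a, Or.inr h⟩)
      have hx : (p, q') ∉ box1 tr1 a L := fun hb => hni ⟨q', htr, hb⟩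
      simp only [box1, Set.mem_setOf_eq, not_forall] at hx
      obtain ⟨p', hp', hmem⟩ := hx
      exact ⟨p', hp', hmem⟩
  -- the union of all bisimulations
  set B : Set (S₁ × S₂) := {pq | ∃ R, IsBisimulation tr1 tr2 R ∧ pq ∈ R} with hB
  have hBbisim : IsBisimulation tr1 tr2 B := by
    constructor
    · rintro a p q p' ⟨R, hR, hpq⟩ htr
      obtain ⟨q', hq', hmem⟩ := hR.1 a p q p' hpq htr
      exact ⟨q', hq', R, hR, hmem⟩
    · rintro a p q q' ⟨R, hR, hpq⟩ htr
      obtain ⟨p', hp', hmem⟩ := hR.2 a p q q' hpq htr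
      exact ⟨p', hp', R, hR, hmem⟩
  set FB : Set (S₁ × S₂) :=
    ⋃ a : Act, (dia1 tr1 a (box2 tr2 a Bᶜ) ∪ dia2 tr2 a (box1 tr1 a Bᶜ)) with hFB
  have h1 : B ⊆ FBᶜ := by
    rintro ⟨p, q⟩ hpq hmem
    rw [hFB, Set.mem_iUnion] at hmem
    obtain ⟨a, h | h⟩ := hmem
    · obtain ⟨p', htr, hbox⟩ := h
      obtain ⟨q', hq', hmem'⟩ := hBbisim.1 a p q p' hpq htr
      exact hbox q' hq' hmem'
    · obtain ⟨q', htr, hbox⟩ := h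
      obtain ⟨p', hp', hmem'⟩ := hBbisim.2 a p q q' hpq htr
      exact hbox p' hp' hmem'
  have h2 : IsBisimulation tr1 tr2 FBᶜ := by
    constructor
    · intro a p q p' hpq htr
      have hni : (p, q) ∉ dia1 tr1 a (box2 tr2 a Bᶜ) := by
        intro h
        exact hpq (Set.mem_iUnion.2 ⟨a, Or.inl h⟩)
      have hx : (p', q) ∉ box2 tr2 a Bᶜ := fun hb => hni ⟨p', htr, hb⟩
      simp only [box2, Set.mem_setOf_eq, not_forall] at hx
      obtain ⟨q', hq', hmem⟩ := hx
      exact ⟨q', hq', h1 (not_not.1 hmem)⟩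
    · intro a p q q' hpq htr
      have hni : (p, q) ∉ dia2 tr2 a (box1 tr1 a Bᶜ) := by
        intro h
        exact hpq (Set.mem_iUnion.2 ⟨a, Or.inr h⟩)
      have hx : (p, q') ∉ box1 tr1 a Bᶜ := fun hb => hni ⟨q', htr, hb⟩
      simp only [box1, Set.mem_setOf_eq, not_forall] at hx
      obtain ⟨p', hp', hmem⟩ := hx
      exact ⟨p', hp', h1 (not_not.1 hmem)⟩
  have h3 : FBᶜ ⊆ B := fun pq h => ⟨FBᶜ, h2, h⟩
  have hBeq : B = FBᶜ := Set.Subset.antisymm h1 h3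
  have heq : Bᶜ = FB := by rw [hBeq, compl_compl]
  have hsub : L ⊆ Bᶜ := hleast Bᶜ heq
  intro P Q
  constructor
  · intro hPQ
    exact ⟨Lᶜ, h4, hPQ⟩
  · rintro ⟨R, hR, hm⟩ hL
    exact hsub hL ⟨R, hR, hm⟩
end

section
/- If P and Q are ready trace equivalent processes of an LTS over a finite set of actions Act (i.e. RT(P) = RT(Q)), then P and Q are failure trace equivalent, i.e. FT(P) = FT(Q). -/
section Aux
variable {S Act : Type*}

/-- Pointwise matching: a ready-trace symbol matches a failure-trace symbol. -/
def Msym (x y : Act ⊕ Set Act) : Prop :=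
  match x, y with
  | Sum.inl a, Sum.inl b => a = b
  | Sum.inr B, Sum.inr A => B ∩ A = ∅
  | _, _ => False

lemma match_split {R : (Act ⊕ Set Act) → (Act ⊕ Set Act) → Prop}
    {v v' u : List (Act ⊕ Set Act)} (h : List.Forall₂ R (v ++ v') u) :
    ∃ u₁ u₂, u = u₁ ++ u₂ ∧ List.Forall₂ R v u₁ ∧ List.Forall₂ R v' u₂ := by
  induction v generalizing u with
  | nil => exact ⟨[], u, rfl, List.Forall₂.nil, h⟩
  | cons x xs ih =>
    cases h with
    | cons hx hrest =>
      obtain ⟨u₁, u₂, rfl, h₁, h₂⟩ := ih hrest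
      exact ⟨_ :: u₁, u₂, rfl, List.Forall₂.cons hx h₁, h₂⟩

lemma ft_to_rt {tr : S → Act → S → Prop} {p q : S} {u : List (Act ⊕ Set Act)}
    (h : FTrace tr p u q) : ∃ v, RTrace tr p v q ∧ List.Forall₂ Msym v u := by
  induction h with
  | refl p => exact ⟨[], RTrace.refl p, List.Forall₂.nil⟩
  | act ha => exact ⟨_, RTrace.act ha, List.Forall₂.cons rfl List.Forall₂.nil⟩
  | @refuse p A hA =>
    exact ⟨[Sum.inr (initials tr p)], RTrace.ready rfl,
      List.Forall₂.cons hA List.Forall₂.nil⟩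
  | comp _ _ ih₁ ih₂ =>
    obtain ⟨v₁, hr₁, hm₁⟩ := ih₁
    obtain ⟨v₂, hr₂, hm₂⟩ := ih₂
    exact ⟨v₁ ++ v₂, RTrace.comp hr₁ hr₂, List.rel_append hm₁ hm₂⟩

lemma rt_to_ft {tr : S → Act → S → Prop} {p q : S} {v u : List (Act ⊕ Set Act)}
    (h : RTrace tr p v q) (hm : List.Forall₂ Msym v u) : FTrace tr p u q := by
  induction h generalizing u with
  | refl p => cases hm; exact FTrace.refl p
  | act ha =>
    cases hm with
    | cons hx hrest =>
      cases hrest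
      rename_i y
      cases y with
      | inl b => cases hx; exact FTrace.act ha
      | inr A => exact absurd hx (by simp [Msym])
  | @ready p B hB =>
    cases hm with
    | cons hx hrest =>
      cases hrest
      rename_i y
      cases y with
      | inl b => exact absurd hx (by simp [Msym])
      | inr A => exact FTrace.refuse (by rw [hB]; exact hx)
  | comp _ _ ih₁ ih₂ =>
    obtain ⟨u₁, u₂, rfl, h₁, h₂⟩ := match_split hm
    exact FTrace.comp (ih₁ h₁) (ih₂ h₂)

lemma ft_eq_rt_based (tr : S → Act → S → Prop) (P : S) :
    ftraceSet tr P = {u | ∃ v ∈ rtraceSet tr P, List.Forall₂ Msym v u} := by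
  ext u
  constructor
  · rintro ⟨q, hq⟩
    obtain ⟨v, hr, hm⟩ := ft_to_rt hq
    exact ⟨v, ⟨q, hr⟩, hm⟩
  · rintro ⟨v, ⟨q, hr⟩, hm⟩
    exact ⟨q, rt_to_ft hr hm⟩

end Aux

/-- over a finite set of actions, ready trace equivalent processes are
failure trace equivalent. -/
theorem stmt_18 {S Act : Type*} [Fintype Act] (tr : S → Act → S → Prop) (P Q : S)
    (h : rtraceSet tr P = rtraceSet tr Q) : ftraceSet tr P = ftraceSet tr Q := by
  rw [ft_eq_rt_based, ft_eq_rt_based, h]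
end
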